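/- arXiv:1804.05466 — 3 statements merged into one kernel-verified Lean document; each statement's English description precedes it below -/
import Mathlib

section
/- Let u : Ω ⊆ ℝⁿ → ℝ^N be C², γ : I → Ω a solution of the rescaled flow γ'(t) = (|Du|²/|ξᵀDu|²) Du(γ(t))ᵀ ξ with Du(γ(t))ᵀξ ≠ 0 on I. If along γ the identity d/dt (½|Du(γ(t))|²) = ((|Du|²/|ξᵀDu|²) · (ξᵀDu)ᵀ · D(½|Du|²))(γ(t)) holds, and u satisfies Du ∇(½|Du|²) = 0 on Ω, then |Du(γ(t))| is constant on I and t ↦ ξ · u(γ(t)) is an affine function of t. -/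
/-!
Along `γ`, the derivative of `½|Du|²` is a multiple of `⟪Duᵀξ, ∇½|Du|²⟫ = ⟪ξ, Du ∇½|Du|²⟫`,
which vanishes by the tangential equation, so `|Du(γ)|²` is constant. The rescaling of the flow
makes `d/dt ξ·u(γ) = (|Du|² / |Duᵀξ|²) ⟪ξ, Du Duᵀξ⟫ = |Du(γ)|²`, a constant, so `ξ·u∘γ` is affine.
-/

open scoped RealInnerProductSpace BigOperators

noncomputable def frob2 {n N : ℕ} (u : EuclideanSpace ℝ (Fin n) → EuclideanSpace ℝ (Fin N))
    (x : EuclideanSpace ℝ (Fin n)) : ℝ :=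
  ∑ i, ‖fderiv ℝ u x (EuclideanSpace.single i 1)‖ ^ 2

noncomputable def lapl {n N : ℕ} (u : EuclideanSpace ℝ (Fin n) → EuclideanSpace ℝ (Fin N))
    (x : EuclideanSpace ℝ (Fin n)) : EuclideanSpace ℝ (Fin N) :=
  ∑ i, fderiv ℝ (fun y => fderiv ℝ u y (EuclideanSpace.single i 1)) x (EuclideanSpace.single i 1)

noncomputable def perpProj {n N : ℕ}
    (T : EuclideanSpace ℝ (Fin n) →L[ℝ] EuclideanSpace ℝ (Fin N))
    (w : EuclideanSpace ℝ (Fin N)) : EuclideanSpace ℝ (Fin N) :=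
  (Submodule.orthogonalProjectionOnto (LinearMap.range (T.toLinearMap))ᗮ w : EuclideanSpace ℝ (Fin N))

noncomputable def inftyLap {n N : ℕ} (u : EuclideanSpace ℝ (Fin n) → EuclideanSpace ℝ (Fin N))
    (x : EuclideanSpace ℝ (Fin n)) : EuclideanSpace ℝ (Fin N) :=
  fderiv ℝ u x (gradient (fun y => (1/2 : ℝ) * frob2 u y) x)
    + frob2 u x • perpProj (fderiv ℝ u x) (lapl u x)

noncomputable def scalarInftyLap {n : ℕ} (f : EuclideanSpace ℝ (Fin n) → ℝ)
    (x : EuclideanSpace ℝ (Fin n)) : ℝ :=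
  ⟪gradient f x, fderiv ℝ (fun y => gradient f y) x (gradient f x)⟫

noncomputable def DuT {n N : ℕ} (u : EuclideanSpace ℝ (Fin n) → EuclideanSpace ℝ (Fin N))
    (x : EuclideanSpace ℝ (Fin n)) (ξ : EuclideanSpace ℝ (Fin N)) : EuclideanSpace ℝ (Fin n) :=
  ContinuousLinearMap.adjoint (fderiv ℝ u x) ξ

theorem Convex.eq_of_hasDerivAt_eq_zero {E : Type*} [NormedAddCommGroup E] [NormedSpace ℝ E]
    {s : Set ℝ} (hs : Convex ℝ s) {f : ℝ → E} (hf : ∀ t ∈ s, HasDerivAt f 0 t)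
    {a b : ℝ} (ha : a ∈ s) (hb : b ∈ s) : f a = f b := by
  have h := hs.norm_image_sub_le_of_norm_hasDerivWithin_le (C := 0)
    (fun t ht => (hf t ht).hasDerivWithinAt) (fun _ _ => norm_zero.le) ha hb
  rw [zero_mul, norm_le_zero_iff, sub_eq_zero] at h
  exact h.symm

theorem Convex.exists_affine_of_hasDerivAt {s : Set ℝ} (hs : Convex ℝ s) {f f' : ℝ → ℝ}
    (hf : ∀ t ∈ s, HasDerivAt f (f' t) t) (hf' : ∀ a ∈ s, ∀ b ∈ s, f' a = f' b) :
    ∃ c d : ℝ, ∀ t ∈ s, f t = c * t + d := by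
  rcases s.eq_empty_or_nonempty with rfl | ⟨t₀, ht₀⟩
  · exact ⟨0, 0, fun t ht => ht.elim⟩
  have hg : ∀ t ∈ s, HasDerivAt (fun t => f t - f' t₀ * t) 0 t := fun t ht => by
    have h := (hf t ht).sub ((hasDerivAt_id' t).const_mul (f' t₀))
    rwa [hf' t ht t₀ ht₀, mul_one, sub_self] at h
  refine ⟨f' t₀, f t₀ - f' t₀ * t₀, fun t ht => ?_⟩
  have := hs.eq_of_hasDerivAt_eq_zero hg ht ht₀
  linarith

section DuT

variable {n N : ℕ} (u : EuclideanSpace ℝ (Fin n) → EuclideanSpace ℝ (Fin N))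
  (ξ : EuclideanSpace ℝ (Fin N))

theorem inner_DuT_left (x v : EuclideanSpace ℝ (Fin n)) :
    ⟪DuT u x ξ, v⟫ = ⟪ξ, fderiv ℝ u x v⟫ :=
  ContinuousLinearMap.adjoint_inner_left _ _ _

theorem inner_fderiv_DuT (x : EuclideanSpace ℝ (Fin n)) :
    ⟪ξ, fderiv ℝ u x (DuT u x ξ)⟫ = ‖DuT u x ξ‖ ^ 2 := by
  rw [← inner_DuT_left, real_inner_self_eq_norm_sq]

theorem hasDerivAt_inner_comp_of_hasDerivAt_smul_DuT {γ : ℝ → EuclideanSpace ℝ (Fin n)}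
    {t a : ℝ} (hu : DifferentiableAt ℝ u (γ t)) (hne : DuT u (γ t) ξ ≠ 0)
    (hγ : HasDerivAt γ ((a / ‖DuT u (γ t) ξ‖ ^ 2) • DuT u (γ t) ξ) t) :
    HasDerivAt (fun s => ⟪ξ, u (γ s)⟫) a t := by
  have h := (innerSL ℝ ξ).hasFDerivAt.comp_hasDerivAt t (hu.hasFDerivAt.comp_hasDerivAt t hγ)
  have hnorm : ‖DuT u (γ t) ξ‖ ^ 2 ≠ 0 := by positivity
  refine h.congr_deriv ?_
  rw [map_smul, innerSL_apply_apply, inner_smul_right, inner_fderiv_DuT, div_mul_cancel₀ _ hnorm]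

end DuT

theorem rescaled_flow_constant_and_affine_general {n N : ℕ}
    (Ω : Set (EuclideanSpace ℝ (Fin n))) (hΩ : IsOpen Ω)
    (u : EuclideanSpace ℝ (Fin n) → EuclideanSpace ℝ (Fin N))
    (hu : ContDiffOn ℝ 2 u Ω)
    (ξ : EuclideanSpace ℝ (Fin N))
    (I : Set ℝ) (hI : I.OrdConnected)
    (γ : ℝ → EuclideanSpace ℝ (Fin n))
    (hγΩ : ∀ t ∈ I, γ t ∈ Ω)
    (hne : ∀ t ∈ I, DuT u (γ t) ξ ≠ 0)
    (hflow : ∀ t ∈ I,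
      HasDerivAt γ ((frob2 u (γ t) / ‖DuT u (γ t) ξ‖ ^ 2) • DuT u (γ t) ξ) t)
    (hident : ∀ t ∈ I,
      HasDerivAt (fun s => (1/2 : ℝ) * frob2 u (γ s))
        ((frob2 u (γ t) / ‖DuT u (γ t) ξ‖ ^ 2) *
          ⟪DuT u (γ t) ξ, gradient (fun y => (1/2 : ℝ) * frob2 u y) (γ t)⟫) t)
    (htang : ∀ x ∈ Ω, fderiv ℝ u x (gradient (fun y => (1/2 : ℝ) * frob2 u y) x) = 0) :
    (∀ s ∈ I, ∀ t ∈ I, ‖frob2 u (γ s)‖ = ‖frob2 u (γ t)‖) ∧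
    (∃ c d : ℝ, ∀ t ∈ I, (⟪ξ, u (γ t)⟫ : ℝ) = c * t + d) := by
  have hconv : Convex ℝ I := hI.convex
  have hfrob : ∀ s ∈ I, ∀ t ∈ I, frob2 u (γ s) = frob2 u (γ t) := by
    have hzero : ∀ t ∈ I, HasDerivAt (fun s => (1/2 : ℝ) * frob2 u (γ s)) 0 t := fun t ht => by
      simpa only [inner_DuT_left, htang _ (hγΩ t ht), inner_zero_right, mul_zero]
        using hident t ht
    intro s hs t ht
    simpa using hconv.eq_of_hasDerivAt_eq_zero hzero hs ht
  refine ⟨fun s hs t ht => by rw [hfrob s hs t ht],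
    hconv.exists_affine_of_hasDerivAt (fun t ht => ?_) hfrob⟩
  have hdiff : DifferentiableAt ℝ u (γ t) :=
    (hu.contDiffAt (hΩ.mem_nhds (hγΩ t ht))).differentiableAt (by norm_num)
  exact hasDerivAt_inner_comp_of_hasDerivAt_smul_DuT u ξ hdiff (hne t ht) (hflow t ht)

/-- Along the rescaled gradient flow `γ' = (|Du|²/|Duᵀξ|²) Du(γ)ᵀξ` with `Du(γ(t))ᵀξ ≠ 0`,
if the differential identity
`d/dt (½|Du(γ(t))|²) = ((|Du|²/|ξᵀDu|²) (ξᵀDu)ᵀ · D(½|Du|²))(γ(t))` holds and `u` satisfies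
the tangential equation `Du ∇(½|Du|²) = 0` on `Ω`, then `|Du(γ(t))|` is constant on `I` and
`t ↦ ξ · u(γ(t))` is affine. -/
theorem rescaled_flow_constant_and_affine {n N : ℕ}
    (Ω : Set (EuclideanSpace ℝ (Fin n))) (hΩ : IsOpen Ω)
    (u : EuclideanSpace ℝ (Fin n) → EuclideanSpace ℝ (Fin N))
    (hu : ContDiffOn ℝ 2 u Ω)
    (ξ : EuclideanSpace ℝ (Fin N)) (hξ : ‖ξ‖ = 1)
    (I : Set ℝ) (hI : I.OrdConnected)
    (γ : ℝ → EuclideanSpace ℝ (Fin n))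
    (hγΩ : ∀ t ∈ I, γ t ∈ Ω)
    (hne : ∀ t ∈ I, DuT u (γ t) ξ ≠ 0)
    (hflow : ∀ t ∈ I,
      HasDerivAt γ ((frob2 u (γ t) / ‖DuT u (γ t) ξ‖ ^ 2) • DuT u (γ t) ξ) t)
    (hident : ∀ t ∈ I,
      HasDerivAt (fun s => (1/2 : ℝ) * frob2 u (γ s))
        ((frob2 u (γ t) / ‖DuT u (γ t) ξ‖ ^ 2) *
          ⟪DuT u (γ t) ξ, gradient (fun y => (1/2 : ℝ) * frob2 u y) (γ t)⟫) t)
    (htang : ∀ x ∈ Ω, fderiv ℝ u x (gradient (fun y => (1/2 : ℝ) * frob2 u y) x) = 0) :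
    (∀ s ∈ I, ∀ t ∈ I, ‖frob2 u (γ s)‖ = ‖frob2 u (γ t)‖) ∧
    (∃ c d : ℝ, ∀ t ∈ I, (⟪ξ, u (γ t)⟫ : ℝ) = c * t + d) :=
  rescaled_flow_constant_and_affine_general Ω hΩ u hu ξ I hI γ hγΩ hne hflow hident htang
end

section
/- Let Ω ⊆ ℝⁿ be open and connected, f ∈ C²(Ω, ℝ), V : ℝ → ℝ^N twice differentiable with |V'(s)| = 1 for all s ∈ f(Ω), and define u = V ∘ f : Ω → ℝ^N. If u satisfies the tangential equation (Du ⊗ Du) : D²u = 0 on Ω, then f satisfies the scalar ∞-Laplace equation Δ_∞ f := Σ_{i,j} D_i f D_j f D²_{ij} f = 0 on Ω. -/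
open scoped RealInnerProductSpace BigOperators

/-!
On `Ω` the chain rule gives `Du v = (Df v) V'(f)`, and since `|V'(f)| = 1` this makes
`|Du|² = |∇f|²` there. Hence `∇(½|Du|²) = ∇(½|∇f|²) = D²f ∇f`, and the tangential equation reads
`⟪∇f, D²f ∇f⟫ V'(f) = 0`; as `V'(f)` is a unit vector, `Δ∞ f = ⟪∇f, D²f ∇f⟫ = 0`.
-/

section Gradient

variable {E : Type*} [NormedAddCommGroup E] [InnerProductSpace ℝ E] [CompleteSpace E]
  {f : E → ℝ} {x : E}

theorem ContDiffAt.differentiableAt_gradient (hf : ContDiffAt ℝ 2 f x) :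
    DifferentiableAt ℝ (gradient f) x :=
  (InnerProductSpace.toDual ℝ E).symm.toContinuousLinearEquiv.differentiableAt.comp x
    ((hf.fderiv_right (m := 1) (by norm_num)).differentiableAt one_ne_zero)

theorem fderiv_half_norm_sq_gradient_apply (hf : ContDiffAt ℝ 2 f x) (v : E) :
    fderiv ℝ (fun y => (1 / 2 : ℝ) * ‖gradient f y‖ ^ 2) x v =
      ⟪gradient f x, fderiv ℝ (gradient f) x v⟫ := by
  rw [((hf.differentiableAt_gradient.hasFDerivAt.norm_sq).const_mul (1 / 2 : ℝ)).fderiv]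
  simp only [smul_apply, ContinuousLinearMap.coe_comp, Function.comp_apply,
    innerSL_apply_apply, smul_eq_mul]
  ring

theorem inner_gradient_half_norm_sq_gradient (hf : ContDiffAt ℝ 2 f x) :
    ⟪gradient f x, gradient (fun y => (1 / 2 : ℝ) * ‖gradient f y‖ ^ 2) x⟫ =
      ⟪gradient f x, fderiv ℝ (gradient f) x (gradient f x)⟫ := by
  rw [real_inner_comm, inner_gradient_left, fderiv_half_norm_sq_gradient_apply hf]

end Gradient

theorem fderiv_apply_of_eventuallyEq_comp {E F : Type*} [NormedAddCommGroup E] [NormedSpace ℝ E]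
    [NormedAddCommGroup F] [NormedSpace ℝ F] {u : E → F} {V : ℝ → F} {f : E → ℝ} {x : E}
    (hu : u =ᶠ[nhds x] V ∘ f) (hV : DifferentiableAt ℝ V (f x)) (hf : DifferentiableAt ℝ f x)
    (v : E) : fderiv ℝ u x v = fderiv ℝ f x v • deriv V (f x) := by
  rw [hu.fderiv_eq, (hV.hasDerivAt.hasFDerivAt.comp x hf.hasFDerivAt).fderiv]
  simp

theorem frob2_eq_of_fderiv_apply {n N : ℕ}
    {u : EuclideanSpace ℝ (Fin n) → EuclideanSpace ℝ (Fin N)} {f : EuclideanSpace ℝ (Fin n) → ℝ}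
    {c : EuclideanSpace ℝ (Fin N)} {x : EuclideanSpace ℝ (Fin n)}
    (h : ∀ v, fderiv ℝ u x v = fderiv ℝ f x v • c) :
    frob2 u x = ‖c‖ ^ 2 * ‖gradient f x‖ ^ 2 := by
  simp only [frob2, h, norm_smul, mul_pow, EuclideanSpace.real_norm_sq_eq (gradient f x),
    Finset.mul_sum, ← inner_gradient_left, EuclideanSpace.inner_single_right]
  simp [mul_comm]

theorem scalar_inftyHarmonic_of_composition_general {n N : ℕ}
    (Ω : Set (EuclideanSpace ℝ (Fin n))) (hΩ : IsOpen Ω)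
    (f : EuclideanSpace ℝ (Fin n) → ℝ) (hf : ContDiffOn ℝ 2 f Ω)
    (V : ℝ → EuclideanSpace ℝ (Fin N))
    (hV1 : Differentiable ℝ V)
    (hVunit : ∀ s ∈ f '' Ω, ‖deriv V s‖ = 1)
    (u : EuclideanSpace ℝ (Fin n) → EuclideanSpace ℝ (Fin N))
    (hu : ∀ x ∈ Ω, u x = V (f x))
    (htang : ∀ x ∈ Ω, fderiv ℝ u x (gradient (fun y => (1/2 : ℝ) * frob2 u y) x) = 0) :
    ∀ x ∈ Ω, scalarInftyLap f x = 0 := by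
  have hf2 : ∀ y ∈ Ω, ContDiffAt ℝ 2 f y := fun y hy => hf.contDiffAt (hΩ.mem_nhds hy)
  have hDu : ∀ y ∈ Ω, ∀ v, fderiv ℝ u y v = fderiv ℝ f y v • deriv V (f y) := fun y hy =>
    fderiv_apply_of_eventuallyEq_comp (Filter.eventually_of_mem (hΩ.mem_nhds hy) hu) (hV1 _)
      ((hf2 y hy).differentiableAt two_ne_zero)
  have hfrob : ∀ y ∈ Ω, frob2 u y = ‖gradient f y‖ ^ 2 := fun y hy => by
    rw [frob2_eq_of_fderiv_apply (hDu y hy), hVunit _ ⟨y, hy, rfl⟩, one_pow, one_mul]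
  intro x hx
  have hw : gradient (fun y => (1 / 2 : ℝ) * frob2 u y) x =
      gradient (fun y => (1 / 2 : ℝ) * ‖gradient f y‖ ^ 2) x :=
    Filter.EventuallyEq.gradient_eq <| Filter.eventually_of_mem (hΩ.mem_nhds hx)
      fun y hy => congrArg ((1 / 2 : ℝ) * ·) (hfrob y hy)
  have hV0 : deriv V (f x) ≠ 0 :=
    norm_ne_zero_iff.mp (by rw [hVunit _ ⟨x, hx, rfl⟩]; exact one_ne_zero)
  have hzero := htang x hx
  rwa [hDu x hx, hw, smul_eq_zero_iff_left hV0, ← inner_gradient_left,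
    inner_gradient_half_norm_sq_gradient (hf2 x hx)] at hzero

/-- If `u = V ∘ f` with `f` C², `V` twice differentiable with unit speed on `f(Ω)`, and `u`
satisfies the tangential equation `(Du ⊗ Du) : D²u = Du ∇(½|Du|²) = 0` on the open connected
set `Ω`, then `f` satisfies the scalar ∞-Laplace equation `Δ∞ f = 0` on `Ω`. -/
theorem scalar_inftyHarmonic_of_composition {n N : ℕ}
    (Ω : Set (EuclideanSpace ℝ (Fin n))) (hΩ : IsOpen Ω) (hconn : IsConnected Ω)
    (f : EuclideanSpace ℝ (Fin n) → ℝ) (hf : ContDiffOn ℝ 2 f Ω)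
    (V : ℝ → EuclideanSpace ℝ (Fin N))
    (hV1 : Differentiable ℝ V) (hV2 : Differentiable ℝ (deriv V))
    (hVunit : ∀ s ∈ f '' Ω, ‖deriv V s‖ = 1)
    (u : EuclideanSpace ℝ (Fin n) → EuclideanSpace ℝ (Fin N))
    (hu : ∀ x ∈ Ω, u x = V (f x))
    (htang : ∀ x ∈ Ω, fderiv ℝ u x (gradient (fun y => (1/2 : ℝ) * frob2 u y) x) = 0) :
    ∀ x ∈ Ω, scalarInftyLap f x = 0 :=
  scalar_inftyHarmonic_of_composition_general Ω hΩ f hf V hV1 hVunit u hu htang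
end

section
/- Let Ω ⊆ ℝⁿ be open and connected, and suppose u ∈ C²(Ω, ℝ^N) satisfies: Ω is covered by open balls {B_m} such that on each B_m, u = a_m + ξ_m f_m with a_m ∈ ℝ^N, ξ_m ∈ 𝕊^{N-1}, f_m ∈ C²(B_m, ℝ), and |Df_m| > 0 on B_m. Then there exist a global a ∈ ℝ^N, ξ ∈ 𝕊^{N-1} (up to sign) and f ∈ C²(Ω, ℝ) such that u = a + ξ f on Ω. -/
open scoped RealInnerProductSpace
open Filter Topology Set

/-!
On each ball `u` takes values in the line `a_m + ℝ ξ_m`, and since `f_m` has no critical point,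
`u` is not locally constant anywhere. Hence if `u` stays in a fixed line `ℓ` near one point of a
ball, two distinct values of `u` on that ball lie on `ℓ`, so `ξ_m` is parallel to `ℓ` and the whole
ball is mapped into `ℓ`. The property "`u` stays in `ℓ` near `x`" therefore spreads across every
ball, hence over the connected set `Ω`; with `ℓ` the line of one ball, the global scalar is
`F x = ⟪ξ, u x - a⟫`.
-/

theorem not_eventually_eq_of_gradient_ne_zero {F : Type*} [NormedAddCommGroup F]
    [InnerProductSpace ℝ F] [CompleteSpace F] {f : F → ℝ} {x : F} (hf : gradient f x ≠ 0) :
    ¬∀ᶠ y in 𝓝 x, f y = f x := fun hconst => by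
  have hmin : IsLocalMin f x := hconst.mono fun y hy => hy.ge
  simp [gradient, hmin.fderiv_eq_zero] at hf

theorem mapsTo_affineSubspace_of_eventually_mem {X 𝕜 V : Type*} [TopologicalSpace X]
    [Field 𝕜] [AddCommGroup V] [Module 𝕜 V] {s : AffineSubspace 𝕜 V}
    {u : X → V} {g : X → 𝕜} {a ξ : V} {B : Set X} {x : X} (hB : B ∈ 𝓝 x)
    (hrep : ∀ y ∈ B, u y = a + g y • ξ) (hg : ¬∀ᶠ y in 𝓝 x, g y = g x)
    (hu : ∀ᶠ y in 𝓝 x, u y ∈ s) : MapsTo u B s := by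
  have hx : x ∈ B := mem_of_mem_nhds hB
  have hxs : u x ∈ s := hu.self_of_nhds
  have hdiff : ∀ z ∈ B, u z -ᵥ u x = (g z - g x) • ξ := fun z hz => by
    rw [vsub_eq_sub, hrep z hz, hrep x hx, sub_smul]; abel
  obtain ⟨y, ⟨hyB, hys⟩, hgy⟩ :=
    (((eventually_mem_set.2 hB).and hu).and_frequently (not_eventually.1 hg)).exists
  have hξ : ξ ∈ s.direction := by
    have := AffineSubspace.vsub_mem_direction hys hxs
    rwa [hdiff y hyB, Submodule.smul_mem_iff _ (sub_ne_zero.2 hgy)] at this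
  intro z hz
  rw [← vsub_vadd (u z) (u x), hdiff z hz]
  exact AffineSubspace.vadd_mem_of_mem_direction (Submodule.smul_mem _ _ hξ) hxs

theorem IsPreconnected.forall_of_spreads_on_cover {X ι : Type*} [TopologicalSpace X] {Ω : Set X}
    (hΩ : IsPreconnected Ω) {B : ι → Set X} (hB : ∀ m, IsOpen (B m)) (hcover : Ω ⊆ ⋃ m, B m)
    {P : X → Prop} (hP : ∀ m, ∀ x ∈ B m, ∀ y ∈ B m, P x → P y) {x₀ : X} (hx₀ : x₀ ∈ Ω)
    (h₀ : P x₀) : ∀ x ∈ Ω, P x := by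
  intro x hx
  refine (hΩ.induction₂ (fun x y => P x ↔ P y) (fun x hx => ?_)
    (fun _ _ _ _ _ _ => Iff.trans) (fun _ _ _ _ => Iff.symm) hx₀ hx).1 h₀
  obtain ⟨m, hxm⟩ := mem_iUnion.1 (hcover hx)
  filter_upwards [mem_nhdsWithin_of_mem_nhds ((hB m).mem_nhds hxm)] with y hym
  exact ⟨hP m x hxm y hym, hP m y hym x hxm⟩

theorem eq_add_inner_smul_of_mem_mk'_span {E : Type*} [NormedAddCommGroup E]
    [InnerProductSpace ℝ E] {A Ξ v : E} (hΞ : ‖Ξ‖ = 1)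
    (hv : v ∈ AffineSubspace.mk' A (ℝ ∙ Ξ)) : v = A + ⟪Ξ, v - A⟫ • Ξ := by
  rw [AffineSubspace.mem_mk', vsub_eq_sub, ← Submodule.starProjection_eq_self_iff,
    Submodule.starProjection_unit_singleton ℝ hΞ] at hv
  rw [hv, add_sub_cancel]

theorem patch_scalar_representation_general {n N : ℕ} {ι : Type*}
    (Ω : Set (EuclideanSpace ℝ (Fin n))) (hconn : IsConnected Ω)
    (u : EuclideanSpace ℝ (Fin n) → EuclideanSpace ℝ (Fin N))
    (hu : ContDiffOn ℝ 2 u Ω)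
    (c : ι → EuclideanSpace ℝ (Fin n)) (ρ : ι → ℝ)
    (hcover : Ω ⊆ ⋃ m, Metric.ball (c m) (ρ m))
    (a : ι → EuclideanSpace ℝ (Fin N)) (ξ : ι → EuclideanSpace ℝ (Fin N))
    (hξ : ∀ m, ‖ξ m‖ = 1)
    (f : ι → EuclideanSpace ℝ (Fin n) → ℝ)
    (hrep : ∀ m, ∀ x ∈ Metric.ball (c m) (ρ m), u x = a m + f m x • ξ m)
    (hgrad : ∀ m, ∀ x ∈ Metric.ball (c m) (ρ m), gradient (f m) x ≠ 0) :
    ∃ (A : EuclideanSpace ℝ (Fin N)) (Ξ : EuclideanSpace ℝ (Fin N))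
      (F : EuclideanSpace ℝ (Fin n) → ℝ),
      ‖Ξ‖ = 1 ∧ ContDiffOn ℝ 2 F Ω ∧ ∀ x ∈ Ω, u x = A + F x • Ξ := by
  obtain ⟨x₀, hx₀⟩ := hconn.nonempty
  obtain ⟨m₀, hxm₀⟩ := mem_iUnion.1 (hcover hx₀)
  set ℓ := AffineSubspace.mk' (a m₀) (ℝ ∙ ξ m₀)
  have hpropagate : ∀ m, ∀ x ∈ Metric.ball (c m) (ρ m), ∀ y ∈ Metric.ball (c m) (ρ m),
      (∀ᶠ z in 𝓝 x, u z ∈ ℓ) → ∀ᶠ z in 𝓝 y, u z ∈ ℓ := fun m x hx y hy hux =>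
    have hmaps := mapsTo_affineSubspace_of_eventually_mem (Metric.isOpen_ball.mem_nhds hx)
      (hrep m) (not_eventually_eq_of_gradient_ne_zero (hgrad m x hx)) hux
    eventually_of_mem (Metric.isOpen_ball.mem_nhds hy) hmaps
  have hstart : ∀ᶠ z in 𝓝 x₀, u z ∈ ℓ := by
    filter_upwards [Metric.isOpen_ball.mem_nhds hxm₀] with z hz
    rw [hrep m₀ z hz, AffineSubspace.mem_mk', vsub_eq_sub, add_sub_cancel_left]
    exact Submodule.smul_mem _ _ (Submodule.mem_span_singleton_self _)
  have hline : ∀ x ∈ Ω, u x ∈ ℓ := fun x hx =>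
    (hconn.isPreconnected.forall_of_spreads_on_cover (fun _ => Metric.isOpen_ball) hcover
      hpropagate hx₀ hstart x hx).self_of_nhds
  exact ⟨a m₀, ξ m₀, fun x => ⟪ξ m₀, u x - a m₀⟫, hξ m₀,
    contDiffOn_const.inner ℝ (hu.sub contDiffOn_const),
    fun x hx => eq_add_inner_smul_of_mem_mk'_span (hξ m₀) (hline x hx)⟩

/-- Patching local essentially-scalar representations: if `u ∈ C²(Ω, ℝ^N)` on an open
connected `Ω` is covered by open balls on each of which `u = a_m + ξ_m f_m` with `ξ_m` a unit
vector, `f_m` C² and `|Df_m| > 0`, then there is a single global representation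
`u = a + ξ f` on `Ω`. -/
theorem patch_scalar_representation {n N : ℕ} {ι : Type*}
    (Ω : Set (EuclideanSpace ℝ (Fin n))) (hΩ : IsOpen Ω) (hconn : IsConnected Ω)
    (u : EuclideanSpace ℝ (Fin n) → EuclideanSpace ℝ (Fin N))
    (hu : ContDiffOn ℝ 2 u Ω)
    (c : ι → EuclideanSpace ℝ (Fin n)) (ρ : ι → ℝ)
    (hsub : ∀ m, Metric.ball (c m) (ρ m) ⊆ Ω)
    (hcover : Ω ⊆ ⋃ m, Metric.ball (c m) (ρ m))
    (a : ι → EuclideanSpace ℝ (Fin N)) (ξ : ι → EuclideanSpace ℝ (Fin N))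
    (hξ : ∀ m, ‖ξ m‖ = 1)
    (f : ι → EuclideanSpace ℝ (Fin n) → ℝ)
    (hf : ∀ m, ContDiffOn ℝ 2 (f m) (Metric.ball (c m) (ρ m)))
    (hrep : ∀ m, ∀ x ∈ Metric.ball (c m) (ρ m), u x = a m + f m x • ξ m)
    (hgrad : ∀ m, ∀ x ∈ Metric.ball (c m) (ρ m), gradient (f m) x ≠ 0) :
    ∃ (A : EuclideanSpace ℝ (Fin N)) (Ξ : EuclideanSpace ℝ (Fin N))
      (F : EuclideanSpace ℝ (Fin n) → ℝ),
      ‖Ξ‖ = 1 ∧ ContDiffOn ℝ 2 F Ω ∧ ∀ x ∈ Ω, u x = A + F x • Ξ :=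
  patch_scalar_representation_general Ω hconn u hu c ρ hcover a ξ hξ f hrep hgrad
end
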